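/- With the extended Cantor iterates c̄ₙ (starting from c₀ = 0 on [0,1], extended by 0 below 0 and 1 above 1), for every x, y ∈ ℝ and n ∈ ℕ, |c̄(x) - c̄ₙ(y)| ≤ |x - y|^{H_λ} + 2^{-n+2}, where H_λ = log 2 / (log 2 - log(1-λ)). -/

import Mathlib

/-!
Run the recursion from the step function `fun x => if x < 1 then 0 else 1` instead of `0`.
Writing `cantorMap l g` as the average of `g` over the two affine charts `[0, (1-l)/2] → [0,1]`
and `[(1+l)/2, 1] → [0,1]`, its iterates `hₙ` stay monotone with `hₙ x ≤ x ^ H` and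
`hₙ y - hₙ x ≤ (y - x) ^ H + 2⁻ⁿ`: the error halves at each step because
`s ^ H + t ^ H ≤ (s + t + l) ^ H` for the two increments `s, t` seen by the charts (concavity of
`x ↦ x ^ H` and `((1 - l) / 2) ^ H = 1 / 2`). Since `cantorMap l` is a `1/2`-contraction for the
sup distance on `[0,1]`, the bounded fixed point `c` takes values in `[0,1]` and `c̄`, `c̄ₙ`, `h̄ₙ`
are pairwise `2⁻ⁿ`-close, so the four error terms add up to `2 ^ (2 - n)`.
-/

open Set Real

/-- The map `H` on bounded functions defining the middle-`l` Cantor function. -/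
noncomputable def cantorMap (l : ℝ) (g : ℝ → ℝ) : ℝ → ℝ := fun x =>
  if x < (1 - l) / 2 then (1 / 2) * g (2 / (1 - l) * x)
  else if x < (1 + l) / 2 then 1 / 2
  else 1 / 2 + (1 / 2) * g (2 / (1 - l) * x - (1 + l) / (1 - l))

/-- The iterates of the middle-`l` Cantor recursion starting from `c₀`. -/
noncomputable def cantorSeq (l : ℝ) (c0 : ℝ → ℝ) : ℕ → ℝ → ℝ
  | 0 => c0
  | n + 1 => cantorMap l (cantorSeq l c0 n)

/-- Extension of a function on `[0,1]` by `0` to the left of `0` and `1` to the right of `1`. -/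
noncomputable def extendUnit (c : ℝ → ℝ) : ℝ → ℝ := fun x =>
  if x < 0 then 0 else if x ≤ 1 then c x else 1

/-- The similarity dimension of the middle-`l` Cantor set: two copies scaled by `(1 - l) / 2`. -/
noncomputable def cantorExp (l : ℝ) : ℝ := Real.log 2 / (Real.log 2 - Real.log (1 - l))

section Exponent

variable {l : ℝ}

lemma log_two_le_sub_log_one_sub (hl₀ : 0 ≤ l) (hl₁ : l < 1) :
    Real.log 2 ≤ Real.log 2 - Real.log (1 - l) := by
  linarith [Real.log_nonpos (by linarith) (by linarith : 1 - l ≤ 1)]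

lemma cantorExp_pos (hl₀ : 0 ≤ l) (hl₁ : l < 1) : 0 < cantorExp l :=
  div_pos (Real.log_pos one_lt_two)
    ((Real.log_pos one_lt_two).trans_le (log_two_le_sub_log_one_sub hl₀ hl₁))

lemma cantorExp_le_one (hl₀ : 0 ≤ l) (hl₁ : l < 1) : cantorExp l ≤ 1 :=
  div_le_one_of_le₀ (log_two_le_sub_log_one_sub hl₀ hl₁)
    ((Real.log_pos one_lt_two).le.trans (log_two_le_sub_log_one_sub hl₀ hl₁))

lemma two_div_one_sub_rpow_cantorExp (hl₀ : 0 ≤ l) (hl₁ : l < 1) :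
    (2 / (1 - l)) ^ cantorExp l = 2 := by
  have hD : Real.log 2 - Real.log (1 - l) ≠ 0 :=
    ((Real.log_pos one_lt_two).trans_le (log_two_le_sub_log_one_sub hl₀ hl₁)).ne'
  rw [Real.rpow_def_of_pos (div_pos two_pos (sub_pos.2 hl₁)),
    Real.log_div two_ne_zero (by linarith), cantorExp, mul_div_cancel₀ _ hD,
    Real.exp_log two_pos]

lemma rpow_add_rpow_le_rpow_cantorExp (hl₀ : 0 ≤ l) (hl₁ : l < 1) {s t : ℝ} (hs : 0 ≤ s)
    (ht : 0 ≤ t) (hst : s + t ≤ 1 - l) :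
    s ^ cantorExp l + t ^ cantorExp l ≤ (s + t + l) ^ cantorExp l := by
  set H := cantorExp l
  have hH := cantorExp_pos hl₀ hl₁
  have hmid : (1 / 2) * s + (1 / 2) * t ≤ (1 - l) / 2 * (s + t + l) := by nlinarith
  have hconc := (Real.concaveOn_rpow hH.le (cantorExp_le_one hl₀ hl₁)).2 (mem_Ici.2 hs)
    (mem_Ici.2 ht) (by norm_num : (0 : ℝ) ≤ 1 / 2) (by norm_num : (0 : ℝ) ≤ 1 / 2) (by norm_num)
  simp only [smul_eq_mul] at hconc
  calc s ^ H + t ^ H = 2 * ((1 / 2) * s ^ H + (1 / 2) * t ^ H) := by ring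
    _ ≤ 2 * ((1 - l) / 2 * (s + t + l)) ^ H := by
        gcongr
        exact hconc.trans (Real.rpow_le_rpow (by positivity) hmid hH.le)
    _ = (2 / (1 - l)) ^ H * ((1 - l) / 2 * (s + t + l)) ^ H := by
        rw [two_div_one_sub_rpow_cantorExp hl₀ hl₁]
    _ = (2 / (1 - l) * ((1 - l) / 2 * (s + t + l))) ^ H :=
        (Real.mul_rpow (div_pos two_pos (sub_pos.2 hl₁)).le (by nlinarith)).symm
    _ = (s + t + l) ^ H := by
        congr 1
        field_simp [(sub_pos.2 hl₁).ne']

end Exponent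

noncomputable def cantorLeftCoord (l x : ℝ) : ℝ := 2 / (1 - l) * min x ((1 - l) / 2)

noncomputable def cantorRightCoord (l x : ℝ) : ℝ :=
  2 / (1 - l) * max x ((1 + l) / 2) - (1 + l) / (1 - l)

section Coordinates

variable {l x : ℝ}

lemma cantorLeftCoord_of_le (hx : x ≤ (1 - l) / 2) : cantorLeftCoord l x = 2 / (1 - l) * x := by
  rw [cantorLeftCoord, min_eq_left hx]

lemma cantorLeftCoord_of_ge (hl₁ : l < 1) (hx : (1 - l) / 2 ≤ x) : cantorLeftCoord l x = 1 := by
  rw [cantorLeftCoord, min_eq_right hx]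
  field_simp [(sub_pos.2 hl₁).ne']

lemma cantorRightCoord_of_le (hl₁ : l < 1) (hx : x ≤ (1 + l) / 2) : cantorRightCoord l x = 0 := by
  rw [cantorRightCoord, max_eq_right hx]
  field_simp [(sub_pos.2 hl₁).ne']
  ring

lemma cantorRightCoord_of_ge (hx : (1 + l) / 2 ≤ x) :
    cantorRightCoord l x = 2 / (1 - l) * x - (1 + l) / (1 - l) := by
  rw [cantorRightCoord, max_eq_left hx]

lemma monotone_cantorLeftCoord (hl₁ : l < 1) : Monotone (cantorLeftCoord l) := fun _ _ h =>
  mul_le_mul_of_nonneg_left (min_le_min_right _ h) (div_pos two_pos (sub_pos.2 hl₁)).le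

lemma monotone_cantorRightCoord (hl₁ : l < 1) : Monotone (cantorRightCoord l) := fun _ _ h =>
  sub_le_sub_right
    (mul_le_mul_of_nonneg_left (max_le_max_right _ h) (div_pos two_pos (sub_pos.2 hl₁)).le) _

lemma cantorLeftCoord_zero (hl₁ : l < 1) : cantorLeftCoord l 0 = 0 := by
  rw [cantorLeftCoord_of_le (by linarith), mul_zero]

lemma cantorLeftCoord_one (hl₀ : 0 ≤ l) (hl₁ : l < 1) : cantorLeftCoord l 1 = 1 :=
  cantorLeftCoord_of_ge hl₁ (by linarith)

lemma cantorRightCoord_zero (hl₀ : 0 ≤ l) (hl₁ : l < 1) : cantorRightCoord l 0 = 0 :=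
  cantorRightCoord_of_le hl₁ (by linarith)

lemma cantorRightCoord_one (hl₁ : l < 1) : cantorRightCoord l 1 = 1 := by
  rw [cantorRightCoord_of_ge (by linarith)]
  field_simp [(sub_pos.2 hl₁).ne']
  ring

lemma mapsTo_cantorLeftCoord (hl₁ : l < 1) :
    MapsTo (cantorLeftCoord l) (Icc 0 1) (Icc 0 1) := by
  intro x hx
  refine ⟨cantorLeftCoord_zero hl₁ ▸ monotone_cantorLeftCoord hl₁ hx.1, ?_⟩
  calc cantorLeftCoord l x ≤ cantorLeftCoord l (max x ((1 - l) / 2)) :=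
        monotone_cantorLeftCoord hl₁ (le_max_left _ _)
    _ = 1 := cantorLeftCoord_of_ge hl₁ (le_max_right _ _)

lemma mapsTo_cantorRightCoord (hl₁ : l < 1) :
    MapsTo (cantorRightCoord l) (Icc 0 1) (Icc 0 1) := by
  intro x hx
  refine ⟨?_, cantorRightCoord_one hl₁ ▸ monotone_cantorRightCoord hl₁ hx.2⟩
  calc 0 = cantorRightCoord l (min x ((1 + l) / 2)) :=
        (cantorRightCoord_of_le hl₁ (min_le_right _ _)).symm
    _ ≤ cantorRightCoord l x := monotone_cantorRightCoord hl₁ (min_le_left _ _)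

lemma cantorMap_eq_ite (g : ℝ → ℝ) (x : ℝ) :
    cantorMap l g x =
      if x < (1 - l) / 2 then g (cantorLeftCoord l x) / 2
      else if x < (1 + l) / 2 then 1 / 2
      else 1 / 2 + g (cantorRightCoord l x) / 2 := by
  rw [cantorMap]
  split_ifs with h₁ h₂
  · rw [cantorLeftCoord_of_le h₁.le]; ring
  · rfl
  · rw [cantorRightCoord_of_ge (not_lt.1 h₂)]; ring

lemma cantorMap_eq_average (hl₀ : 0 ≤ l) (hl₁ : l < 1) {g : ℝ → ℝ} (hg₀ : g 0 = 0)
    (hg₁ : g 1 = 1) (x : ℝ) :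
    cantorMap l g x = (g (cantorLeftCoord l x) + g (cantorRightCoord l x)) / 2 := by
  rw [cantorMap_eq_ite]
  split_ifs with h₁ h₂
  · rw [cantorRightCoord_of_le hl₁ (by linarith), hg₀, add_zero]
  · rw [cantorLeftCoord_of_ge hl₁ (not_lt.1 h₁), cantorRightCoord_of_le hl₁ h₂.le, hg₀, hg₁]
    norm_num
  · rw [cantorLeftCoord_of_ge hl₁ (by linarith), hg₁]; ring

lemma abs_cantorMap_sub_le (hl₁ : l < 1) {f g : ℝ → ℝ} {δ : ℝ}
    (h : ∀ z ∈ Icc (0 : ℝ) 1, |f z - g z| ≤ δ) :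
    ∀ z ∈ Icc (0 : ℝ) 1, |cantorMap l f z - cantorMap l g z| ≤ δ / 2 := by
  intro z hz
  rw [cantorMap_eq_ite, cantorMap_eq_ite]
  split_ifs
  · rw [← sub_div, abs_div, abs_two]
    exact div_le_div_of_nonneg_right (h _ (mapsTo_cantorLeftCoord hl₁ hz)) zero_le_two
  · rw [sub_self, abs_zero]
    exact div_nonneg ((abs_nonneg _).trans (h 0 (left_mem_Icc.2 zero_le_one))) zero_le_two
  · rw [add_sub_add_left_eq_sub, ← sub_div, abs_div, abs_two]
    exact div_le_div_of_nonneg_right (h _ (mapsTo_cantorRightCoord hl₁ hz)) zero_le_two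

/-- Halving and rescaling by `2 / (1 - l)` cancel in the exponent `cantorExp l`; the two
increments `s, t` seen by the two halves satisfy `s + t + l ≤ b - a` whenever both are positive. -/
lemma cantorCoord_sub_rpow_add_le (hl₀ : 0 ≤ l) (hl₁ : l < 1) {a b : ℝ} (hab : a ≤ b)
    (hba : b ≤ a + 1) :
    (cantorLeftCoord l b - cantorLeftCoord l a) ^ cantorExp l
      + (cantorRightCoord l b - cantorRightCoord l a) ^ cantorExp l
      ≤ 2 * (b - a) ^ cantorExp l := by
  set H := cantorExp l
  have hH := cantorExp_pos hl₀ hl₁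
  have hscale : ∀ u, 0 ≤ u → (2 / (1 - l) * u) ^ H = 2 * u ^ H := fun u hu => by
    rw [Real.mul_rpow (div_pos two_pos (sub_pos.2 hl₁)).le hu,
      two_div_one_sub_rpow_cantorExp hl₀ hl₁]
  set s := min b ((1 - l) / 2) - min a ((1 - l) / 2)
  set t := max b ((1 + l) / 2) - max a ((1 + l) / 2)
  have hs : 0 ≤ s := sub_nonneg.2 (min_le_min_right _ hab)
  have ht : 0 ≤ t := sub_nonneg.2 (max_le_max_right _ hab)
  have hsab : s ≤ b - a := by
    have : min b ((1 - l) / 2) - (b - a) ≤ min a ((1 - l) / 2) :=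
      le_min (by linarith [min_le_left b ((1 - l) / 2)])
        (by linarith [min_le_right b ((1 - l) / 2)])
    linarith
  have htab : t ≤ b - a := by
    have : max b ((1 + l) / 2) ≤ max a ((1 + l) / 2) + (b - a) :=
      max_le (by linarith [le_max_left a ((1 + l) / 2)])
        (by linarith [le_max_right a ((1 + l) / 2)])
    linarith
  have hL : cantorLeftCoord l b - cantorLeftCoord l a = 2 / (1 - l) * s := by
    simp only [cantorLeftCoord, s]; ring
  have hR : cantorRightCoord l b - cantorRightCoord l a = 2 / (1 - l) * t := by
    simp only [cantorRightCoord, t]; ring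
  rw [hL, hR, hscale s hs, hscale t ht, ← mul_add]
  gcongr
  rcases le_or_gt ((1 - l) / 2) a with ha | ha
  · have hs0 : s = 0 := by simp only [s, min_eq_right ha, min_eq_right (ha.trans hab), sub_self]
    rw [hs0, Real.zero_rpow hH.ne', zero_add]
    exact Real.rpow_le_rpow ht htab hH.le
  rcases le_or_gt b ((1 + l) / 2) with hb | hb
  · have ht0 : t = 0 := by simp only [t, max_eq_right hb, max_eq_right (hab.trans hb), sub_self]
    rw [ht0, Real.zero_rpow hH.ne', add_zero]
    exact Real.rpow_le_rpow hs hsab hH.le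
  have hsum : s + t + l = b - a := by
    simp only [s, t, min_eq_left ha.le, min_eq_right (by linarith : (1 - l) / 2 ≤ b),
      max_eq_left hb.le, max_eq_right (by linarith : a ≤ (1 + l) / 2)]
    ring
  rw [← hsum]
  exact rpow_add_rpow_le_rpow_cantorExp hl₀ hl₁ hs ht (by linarith)

end Coordinates

/-- The sharp bound `le_rpow`, without `ε`, is what makes the error halve under `cantorMap`. -/
structure HolderUpTo (H ε : ℝ) (g : ℝ → ℝ) : Prop where
  map_zero : g 0 = 0
  map_one : g 1 = 1
  monotoneOn : MonotoneOn g (Icc 0 1)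
  le_rpow : ∀ x ∈ Icc (0 : ℝ) 1, g x ≤ x ^ H
  sub_le : ∀ x ∈ Icc (0 : ℝ) 1, ∀ y ∈ Icc (0 : ℝ) 1, x ≤ y → g y - g x ≤ (y - x) ^ H + ε

namespace HolderUpTo

variable {H ε : ℝ} {g : ℝ → ℝ}

lemma mem_Icc (hg : HolderUpTo H ε g) {x : ℝ} (hx : x ∈ Icc (0 : ℝ) 1) : g x ∈ Icc (0 : ℝ) 1 :=
  ⟨hg.map_zero ▸ hg.monotoneOn (left_mem_Icc.2 zero_le_one) hx hx.1,
    hg.map_one ▸ hg.monotoneOn hx (right_mem_Icc.2 zero_le_one) hx.2⟩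

lemma abs_sub_le (hg : HolderUpTo H ε g) {x y : ℝ} (hx : x ∈ Icc (0 : ℝ) 1)
    (hy : y ∈ Icc (0 : ℝ) 1) : |g x - g y| ≤ |x - y| ^ H + ε := by
  wlog hxy : x ≤ y generalizing x y
  · rw [abs_sub_comm, abs_sub_comm x]
    exact this hy hx (le_of_not_ge hxy)
  rw [abs_of_nonpos (sub_nonpos.2 (hg.monotoneOn hx hy hxy)),
    abs_of_nonpos (sub_nonpos.2 hxy), neg_sub, neg_sub]
  exact hg.sub_le x hx y hy hxy

lemma extendUnit_eq (hg : HolderUpTo H ε g) (x : ℝ) :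
    extendUnit g x = g (projIcc 0 1 zero_le_one x) := by
  unfold extendUnit
  split_ifs with h₀ h₁
  · rw [projIcc_of_le_left _ h₀.le, hg.map_zero]
  · rw [projIcc_of_mem _ ⟨not_lt.1 h₀, h₁⟩]
  · rw [projIcc_of_right_le _ (not_le.1 h₁).le, hg.map_one]

lemma abs_extendUnit_sub_le (hg : HolderUpTo H ε g) (hH : 0 ≤ H) (x y : ℝ) :
    |extendUnit g x - extendUnit g y| ≤ |x - y| ^ H + ε := by
  rw [hg.extendUnit_eq, hg.extendUnit_eq]
  exact (hg.abs_sub_le (Subtype.mem _) (Subtype.mem _)).trans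
    (add_le_add_left (Real.rpow_le_rpow (abs_nonneg _) (abs_projIcc_sub_projIcc _) hH) _)

end HolderUpTo

lemma holderUpTo_step {H : ℝ} (hH : 0 ≤ H) :
    HolderUpTo H 1 (fun x => if x < 1 then 0 else 1) where
  map_zero := if_pos zero_lt_one
  map_one := if_neg (lt_irrefl 1)
  monotoneOn x _ y _ hxy := by
    dsimp only
    split_ifs <;> linarith
  le_rpow x hx := by
    split_ifs with h
    · exact Real.rpow_nonneg hx.1 _
    · exact Real.one_le_rpow (not_lt.1 h) hH
  sub_le x _ y _ hxy := by
    have := Real.rpow_nonneg (sub_nonneg.2 hxy) H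
    split_ifs <;> linarith

section Recursion

variable {l ε : ℝ} {g : ℝ → ℝ}

lemma HolderUpTo.cantorMap (hl₀ : 0 ≤ l) (hl₁ : l < 1) (hg : HolderUpTo (cantorExp l) ε g) :
    HolderUpTo (cantorExp l) (ε / 2) (cantorMap l g) := by
  have havg := cantorMap_eq_average hl₀ hl₁ hg.map_zero hg.map_one
  have hL := mapsTo_cantorLeftCoord hl₁
  have hR := mapsTo_cantorRightCoord hl₁
  have hH := cantorExp_pos hl₀ hl₁
  refine ⟨?_, ?_, ?_, ?_, ?_⟩
  · rw [havg, cantorLeftCoord_zero hl₁, cantorRightCoord_zero hl₀ hl₁, hg.map_zero]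
    norm_num
  · rw [havg, cantorLeftCoord_one hl₀ hl₁, cantorRightCoord_one hl₁, hg.map_one]
    norm_num
  · intro x hx y hy hxy
    have h₁ := hg.monotoneOn (hL hx) (hL hy) (monotone_cantorLeftCoord hl₁ hxy)
    have h₂ := hg.monotoneOn (hR hx) (hR hy) (monotone_cantorRightCoord hl₁ hxy)
    rw [havg, havg]
    linarith
  · intro x hx
    have h₁ := hg.le_rpow _ (hL hx)
    have h₂ := hg.le_rpow _ (hR hx)
    have hwin := cantorCoord_sub_rpow_add_le hl₀ hl₁ hx.1 (by linarith [hx.2])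
    rw [cantorLeftCoord_zero hl₁, cantorRightCoord_zero hl₀ hl₁, sub_zero, sub_zero,
      sub_zero] at hwin
    rw [havg]
    linarith
  · intro x hx y hy hxy
    have hwin := cantorCoord_sub_rpow_add_le hl₀ hl₁ hxy (by linarith [hx.1, hy.2])
    have hsplit : g (cantorLeftCoord l y) - g (cantorLeftCoord l x)
        + (g (cantorRightCoord l y) - g (cantorRightCoord l x))
        ≤ (cantorLeftCoord l y - cantorLeftCoord l x) ^ cantorExp l
          + (cantorRightCoord l y - cantorRightCoord l x) ^ cantorExp l + ε := by
      rcases lt_or_ge x ((1 - l) / 2) with hxl | hxl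
      · have hRx : cantorRightCoord l x = 0 := cantorRightCoord_of_le hl₁ (by linarith)
        have h₁ := hg.sub_le _ (hL hx) _ (hL hy) (monotone_cantorLeftCoord hl₁ hxy)
        have h₂ := hg.le_rpow _ (hR hy)
        rw [hRx, hg.map_zero, sub_zero, sub_zero]
        linarith
      · have hLx := cantorLeftCoord_of_ge hl₁ hxl
        have hLy := cantorLeftCoord_of_ge hl₁ (hxl.trans hxy)
        have h₂ := hg.sub_le _ (hR hx) _ (hR hy) (monotone_cantorRightCoord hl₁ hxy)
        rw [hLx, hLy, sub_self, sub_self, Real.zero_rpow hH.ne']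
        linarith
    rw [havg, havg]
    linarith

lemma HolderUpTo.cantorSeq (hl₀ : 0 ≤ l) (hl₁ : l < 1) (hg : HolderUpTo (cantorExp l) ε g)
    (n : ℕ) : HolderUpTo (cantorExp l) (ε / 2 ^ n) (cantorSeq l g n) := by
  induction n with
  | zero => rw [pow_zero, div_one]; exact hg
  | succ n ih => rw [pow_succ, ← div_div]; exact ih.cantorMap hl₀ hl₁

end Recursion

lemma abs_extendUnit_sub_extendUnit_le {f g : ℝ → ℝ} {δ : ℝ}
    (h : ∀ z ∈ Icc (0 : ℝ) 1, |f z - g z| ≤ δ) (x : ℝ) :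
    |extendUnit f x - extendUnit g x| ≤ δ := by
  have hδ : 0 ≤ δ := (abs_nonneg _).trans (h 0 (left_mem_Icc.2 zero_le_one))
  unfold extendUnit
  split_ifs with h₀ h₁
  · rwa [sub_self, abs_zero]
  · exact h x ⟨not_lt.1 h₀, h₁⟩
  · rwa [sub_self, abs_zero]

section FixedPoint

open Filter

variable {l : ℝ} {c : ℝ → ℝ}

lemma abs_sub_cantorSeq_le (hl₁ : l < 1) (hc : ∀ z ∈ Icc (0 : ℝ) 1, c z = cantorMap l c z)
    {g : ℝ → ℝ} {δ : ℝ} (h : ∀ z ∈ Icc (0 : ℝ) 1, |c z - g z| ≤ δ) (n : ℕ) :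
    ∀ z ∈ Icc (0 : ℝ) 1, |c z - cantorSeq l g n z| ≤ δ / 2 ^ n := by
  induction n with
  | zero => simpa [cantorSeq] using h
  | succ n ih =>
    intro z hz
    rw [hc z hz, pow_succ, ← div_div]
    exact abs_cantorMap_sub_le hl₁ ih z hz

lemma mem_Icc_of_cantorMap_fixed (hl₀ : 0 ≤ l) (hl₁ : l < 1)
    (hcb : ∃ M, ∀ x ∈ Icc (0 : ℝ) 1, |c x| ≤ M)
    (hc : ∀ z ∈ Icc (0 : ℝ) 1, c z = cantorMap l c z) :
    ∀ z ∈ Icc (0 : ℝ) 1, c z ∈ Icc (0 : ℝ) 1 := by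
  obtain ⟨M, hM⟩ := hcb
  have hstep := holderUpTo_step (cantorExp_pos hl₀ hl₁).le
  have hdist : ∀ z ∈ Icc (0 : ℝ) 1, |c z - (if z < 1 then 0 else 1)| ≤ M + 1 := fun z hz =>
    (abs_sub _ _).trans (add_le_add (hM z hz) (abs_le.2 ⟨by linarith [(hstep.mem_Icc hz).1],
      (hstep.mem_Icc hz).2⟩))
  intro z hz
  refine isClosed_Icc.mem_of_tendsto (b := atTop) (f := fun n => cantorSeq l _ n z) ?_
    (Eventually.of_forall fun n => (hstep.cantorSeq hl₀ hl₁ n).mem_Icc hz)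
  rw [tendsto_iff_dist_tendsto_zero]
  refine squeeze_zero (fun _ => dist_nonneg) (fun n => ?_)
    ((tendsto_const_nhds (x := M + 1)).div_atTop (tendsto_pow_atTop_atTop_of_one_lt one_lt_two))
  rw [Real.dist_eq, abs_sub_comm]
  exact abs_sub_cantorSeq_le hl₁ hc hdist n z hz

end FixedPoint

/-- For the extended middle-λ Cantor function `c̄` and the extended iterates `c̄ₙ`
started from `c₀ = 0` on `[0,1]`:
`|c̄ x - c̄ₙ y| ≤ |x - y| ^ H_λ + 2^(-n+2)` for all `x, y ∈ ℝ` and `n ∈ ℕ`. -/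
theorem extendedCantor_iterate_bound (l : ℝ) (hl : l ∈ Set.Ioo (0 : ℝ) 1)
    (c : ℝ → ℝ)
    (hcb : ∃ M, ∀ x ∈ Set.Icc (0 : ℝ) 1, |c x| ≤ M)
    (hc : ∀ x ∈ Set.Icc (0 : ℝ) 1, c x = cantorMap l c x) :
    ∀ x y : ℝ, ∀ n : ℕ,
      |extendUnit c x - extendUnit (cantorSeq l (fun _ => 0) n) y|
        ≤ |x - y| ^ (Real.log 2 / (Real.log 2 - Real.log (1 - l)))
            + (2 : ℝ) ^ ((2 : ℤ) - (n : ℤ)) := by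
  intro x y n
  obtain ⟨hl₀, hl₁⟩ := hl
  have hH := cantorExp_pos hl₀.le hl₁
  have hstep := holderUpTo_step hH.le
  have hc01 := mem_Icc_of_cantorMap_fixed hl₀.le hl₁ hcb hc
  set cₙ := extendUnit (cantorSeq l (fun _ => 0) n)
  set hₙ := extendUnit (cantorSeq l (fun x => if x < 1 then 0 else 1) n)
  have hcc : ∀ z, |extendUnit c z - cₙ z| ≤ 1 / 2 ^ n := abs_extendUnit_sub_extendUnit_le <|
    abs_sub_cantorSeq_le hl₁ hc (fun z hz =>
      abs_sub_le_of_nonneg_of_le (hc01 z hz).1 (hc01 z hz).2 le_rfl zero_le_one) n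
  have hch : ∀ z, |extendUnit c z - hₙ z| ≤ 1 / 2 ^ n := abs_extendUnit_sub_extendUnit_le <|
    abs_sub_cantorSeq_le hl₁ hc (fun z hz => abs_sub_le_of_nonneg_of_le (hc01 z hz).1
      (hc01 z hz).2 (hstep.mem_Icc hz).1 (hstep.mem_Icc hz).2) n
  have hhol := (hstep.cantorSeq hl₀.le hl₁ n).abs_extendUnit_sub_le hH.le x y
  calc |extendUnit c x - cₙ y|
      ≤ |extendUnit c x - hₙ x| + |hₙ x - hₙ y| + |hₙ y - extendUnit c y|
        + |extendUnit c y - cₙ y| := by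
        linarith [abs_sub_le (extendUnit c x) (hₙ x) (cₙ y), abs_sub_le (hₙ x) (hₙ y) (cₙ y),
          abs_sub_le (hₙ y) (extendUnit c y) (cₙ y)]
    _ ≤ 1 / 2 ^ n + (|x - y| ^ cantorExp l + 1 / 2 ^ n) + 1 / 2 ^ n + 1 / 2 ^ n := by
        rw [abs_sub_comm (hₙ y)]
        linarith [hch x, hch y, hcc y]
    _ = |x - y| ^ cantorExp l + 2 ^ ((2 : ℤ) - n) := by
        rw [zpow_sub₀ two_ne_zero, zpow_natCast]
        ring
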